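/- arXiv:1605.00817 — 3 statements merged into one kernel-verified Lean document; each statement's English description precedes it below -/
import Mathlib

section
/- For every symbol a ∈ Σ and every language L ⊆ Σ*, the left quotient of the shuffle closure satisfies a\(L^‖) = (a\L) ‖ L^‖. -/
/-!
Left quotients obey a Leibniz rule for shuffle: `a\(L ‖ M) = (a\L ‖ M) ∪ (L ‖ a\M)`.
Applied to the shuffle powers `L^(n+1) = L ‖ L^(n)`, it gives `a\L^(n) ⊆ a\L ‖ L^‖` by induction
on `n`: the second summand `L ‖ (a\L ‖ L^‖)` equals `a\L ‖ (L ‖ L^‖)` by left commutativity of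
shuffle, and `L ‖ L^‖ ⊆ L^‖`. Conversely `a\L ‖ L^‖` is the first summand of `a\(L ‖ L^‖) ⊆ a\L^‖`.
-/

variable {α : Type*}

/-- The shuffle of two words: `ε ‖ v = {v}`, `u ‖ ε = {u}`,
`(a·u) ‖ (b·v) = {a}·(u ‖ (b·v)) ∪ {b}·((a·u) ‖ v)`. -/
def wordShuffle : List α → List α → Set (List α)
  | [], v => {v}
  | a :: u, [] => {a :: u}
  | a :: u, b :: v =>
      (fun w => a :: w) '' wordShuffle u (b :: v) ∪ (fun w => b :: w) '' wordShuffle (a :: u) v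
  termination_by u v => u.length + v.length

/-- The shuffle of two languages: `L₁ ‖ L₂ = ⋃ { u ‖ v | u ∈ L₁, v ∈ L₂ }`. -/
def langShuffle (L₁ L₂ : Language α) : Language α :=
  ⋃ u ∈ L₁, ⋃ v ∈ L₂, wordShuffle u v

/-- The left quotient of a language by a symbol: `a\L = { w | a·w ∈ L }`. -/
def leftQuot (a : α) (L : Language α) : Language α :=
  { w | a :: w ∈ L }

/-- The `n`-fold shuffle of `L` with itself; the `0`-fold shuffle is `{ε}`. -/
def shufflePow (L : Language α) : ℕ → Language α
  | 0 => {[]}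
  | n + 1 => langShuffle L (shufflePow L n)

/-- The shuffle closure `L^‖ = {ε} ∪ L ∪ (L ‖ L) ∪ (L ‖ L ‖ L) ∪ …`. -/
def shuffleClosure (L : Language α) : Language α :=
  ⋃ n : ℕ, shufflePow L n

section wordShuffle

@[simp]
theorem wordShuffle_nil_left (v : List α) : wordShuffle [] v = {v} := by
  simp [wordShuffle]

@[simp]
theorem wordShuffle_nil_right (u : List α) : wordShuffle u [] = {u} := by
  cases u <;> simp [wordShuffle]

theorem nil_mem_wordShuffle_iff {u v : List α} : [] ∈ wordShuffle u v ↔ u = [] ∧ v = [] := by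
  cases u with
  | nil => simp [eq_comm]
  | cons a u => cases v <;> simp [wordShuffle]

theorem cons_mem_wordShuffle_cons_left {a : α} {w u v : List α} (h : w ∈ wordShuffle u v) :
    a :: w ∈ wordShuffle (a :: u) v := by
  cases v with
  | nil => simp_all
  | cons b v => rw [wordShuffle]; exact .inl ⟨w, h, rfl⟩

theorem cons_mem_wordShuffle_cons_right {a : α} {w u v : List α} (h : w ∈ wordShuffle u v) :
    a :: w ∈ wordShuffle u (a :: v) := by
  cases u with
  | nil => simp_all
  | cons b u => rw [wordShuffle]; exact .inr ⟨w, h, rfl⟩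

theorem cons_mem_wordShuffle_iff {a : α} {w u v : List α} :
    a :: w ∈ wordShuffle u v ↔
      (∃ u', u = a :: u' ∧ w ∈ wordShuffle u' v) ∨ (∃ v', v = a :: v' ∧ w ∈ wordShuffle u v') := by
  refine ⟨fun h ↦ ?_, ?_⟩
  · match u, v, h with
    | [], v, h => exact .inr ⟨w, by simpa [eq_comm] using h, by simp⟩
    | b :: u, [], h => exact .inl ⟨u, by simp_all⟩
    | b :: u, c :: v, h =>
      rw [wordShuffle] at h
      rcases h with ⟨x, hx, hxw⟩ | ⟨x, hx, hxw⟩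
      · obtain ⟨rfl, rfl⟩ := List.cons_eq_cons.1 hxw
        exact .inl ⟨u, rfl, hx⟩
      · obtain ⟨rfl, rfl⟩ := List.cons_eq_cons.1 hxw
        exact .inr ⟨v, rfl, hx⟩
  · rintro (⟨u', rfl, h⟩ | ⟨v', rfl, h⟩)
    · exact cons_mem_wordShuffle_cons_left h
    · exact cons_mem_wordShuffle_cons_right h

theorem exists_mem_wordShuffle_left_comm {s u v w t : List α} (hs : s ∈ wordShuffle u t)
    (ht : t ∈ wordShuffle v w) : ∃ q ∈ wordShuffle u w, s ∈ wordShuffle v q := by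
  induction s generalizing u v w t with
  | nil =>
    obtain ⟨rfl, rfl⟩ := nil_mem_wordShuffle_iff.1 hs
    obtain ⟨rfl, rfl⟩ := nil_mem_wordShuffle_iff.1 ht
    exact ⟨[], by simp, by simp⟩
  | cons d s ih =>
    rcases cons_mem_wordShuffle_iff.1 hs with ⟨u, rfl, hs'⟩ | ⟨t, rfl, hs'⟩
    · obtain ⟨q, hq, hs''⟩ := ih hs' ht
      exact ⟨d :: q, cons_mem_wordShuffle_cons_left hq, cons_mem_wordShuffle_cons_right hs''⟩
    rcases cons_mem_wordShuffle_iff.1 ht with ⟨v, rfl, ht'⟩ | ⟨w, rfl, ht'⟩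
    · obtain ⟨q, hq, hs''⟩ := ih hs' ht'
      exact ⟨q, hq, cons_mem_wordShuffle_cons_left hs''⟩
    · obtain ⟨q, hq, hs''⟩ := ih hs' ht'
      exact ⟨d :: q, cons_mem_wordShuffle_cons_right hq, cons_mem_wordShuffle_cons_right hs''⟩

end wordShuffle

section langShuffle

variable {a : α} {w : List α} {L M N : Language α}

theorem mem_langShuffle : w ∈ langShuffle L M ↔ ∃ u ∈ L, ∃ v ∈ M, w ∈ wordShuffle u v := by
  show w ∈ (⋃ u ∈ L, ⋃ v ∈ M, wordShuffle u v : Set (List α)) ↔ _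
  simp only [Set.mem_iUnion, exists_prop]

theorem mem_leftQuot : w ∈ leftQuot a L ↔ a :: w ∈ L := Iff.rfl

theorem mem_shuffleClosure : w ∈ shuffleClosure L ↔ ∃ n, w ∈ shufflePow L n := Set.mem_iUnion

theorem leftQuot_mono (h : L ≤ M) : leftQuot a L ≤ leftQuot a M := fun _ hw ↦ h hw

theorem langShuffle_mono_right (h : M ≤ N) : langShuffle L M ≤ langShuffle L N := by
  intro w hw
  obtain ⟨u, hu, v, hv, hw⟩ := mem_langShuffle.1 hw
  exact mem_langShuffle.2 ⟨u, hu, v, h hv, hw⟩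

theorem langShuffle_left_comm_le :
    langShuffle L (langShuffle M N) ≤ langShuffle M (langShuffle L N) := by
  intro s hs
  obtain ⟨u, hu, t, ht, hs⟩ := mem_langShuffle.1 hs
  obtain ⟨v, hv, w, hw, ht⟩ := mem_langShuffle.1 ht
  obtain ⟨q, hq, hs⟩ := exists_mem_wordShuffle_left_comm hs ht
  exact mem_langShuffle.2 ⟨v, hv, q, mem_langShuffle.2 ⟨u, hu, w, hw, hq⟩, hs⟩

theorem leftQuot_langShuffle :
    leftQuot a (langShuffle L M) = langShuffle (leftQuot a L) M ⊔ langShuffle L (leftQuot a M) := by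
  ext w
  change w ∈ leftQuot a _ ↔ w ∈ langShuffle _ _ ∨ w ∈ langShuffle _ _
  simp only [mem_leftQuot, mem_langShuffle, cons_mem_wordShuffle_iff]
  constructor
  · rintro ⟨u, hu, v, hv, ⟨u', rfl, hw⟩ | ⟨v', rfl, hw⟩⟩
    · exact .inl ⟨u', hu, v, hv, hw⟩
    · exact .inr ⟨u, hu, v', hv, hw⟩
  · rintro (⟨u, hu, v, hv, hw⟩ | ⟨u, hu, v, hv, hw⟩)
    · exact ⟨a :: u, hu, v, hv, .inl ⟨u, rfl, hw⟩⟩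
    · exact ⟨u, hu, a :: v, hv, .inr ⟨v, rfl, hw⟩⟩

end langShuffle

section shuffleClosure

variable {a : α} {L : Language α}

theorem langShuffle_shuffleClosure_le : langShuffle L (shuffleClosure L) ≤ shuffleClosure L := by
  intro w hw
  obtain ⟨u, hu, v, hv, hw⟩ := mem_langShuffle.1 hw
  obtain ⟨n, hn⟩ := mem_shuffleClosure.1 hv
  exact mem_shuffleClosure.2 ⟨n + 1, mem_langShuffle.2 ⟨u, hu, v, hn, hw⟩⟩

theorem leftQuot_shufflePow_le (n : ℕ) :
    leftQuot a (shufflePow L n) ≤ langShuffle (leftQuot a L) (shuffleClosure L) := by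
  induction n with
  | zero => intro w hw; exact absurd hw (List.cons_ne_nil a w)
  | succ n ih =>
    calc leftQuot a (shufflePow L (n + 1))
        = langShuffle (leftQuot a L) (shufflePow L n) ⊔
            langShuffle L (leftQuot a (shufflePow L n)) := leftQuot_langShuffle
      _ ≤ langShuffle (leftQuot a L) (shuffleClosure L) ⊔
            langShuffle L (langShuffle (leftQuot a L) (shuffleClosure L)) :=
          sup_le_sup (langShuffle_mono_right fun _ hw ↦ mem_shuffleClosure.2 ⟨n, hw⟩)
            (langShuffle_mono_right ih)
      _ ≤ langShuffle (leftQuot a L) (shuffleClosure L) :=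
          sup_le le_rfl (langShuffle_left_comm_le.trans
            (langShuffle_mono_right langShuffle_shuffleClosure_le))

end shuffleClosure

theorem leftQuot_shuffleClosure (a : α) (L : Language α) :
    leftQuot a (shuffleClosure L) = langShuffle (leftQuot a L) (shuffleClosure L) := by
  refine le_antisymm (fun w hw ↦ ?_) ?_
  · obtain ⟨n, hn⟩ := mem_shuffleClosure.1 hw
    exact leftQuot_shufflePow_le n hn
  · calc langShuffle (leftQuot a L) (shuffleClosure L)
        ≤ leftQuot a (langShuffle L (shuffleClosure L)) :=
          le_sup_left.trans_eq leftQuot_langShuffle.symm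
      _ ≤ leftQuot a (shuffleClosure L) := leftQuot_mono langShuffle_shuffleClosure_le
end

section
/- Let Σ be a finite alphabet and h : Σ → Σ⁺ a non-erasing function (h(b) ≠ ε for all b), extended homomorphically to h : Σ* → Σ*. For every symbol a ∈ Σ and every language L ⊆ Σ*, the left quotient of the homomorphic image satisfies a\(h(L)) = ⋃ { {v} · h(b\L) | b ∈ Σ, v ∈ Σ*, h(b) = a·v }, where h(M) = { h(w) | w ∈ M }. -/
variable {α : Type*}

/-- The homomorphic extension of `h : Σ → Σ*` to words: `h(ε) = ε`, `h(a·w) = h(a)·h(w)`. -/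
def homExt (h : α → List α) : List α → List α
  | [] => []
  | a :: w => h a ++ homExt h w

/-- The left quotient of a language by a word: `u\L = { w | u·w ∈ L }`. -/
def leftQuotWord (u : List α) (L : Language α) : Language α :=
  { w | u ++ w ∈ L }

/-- The homomorphic image `h(L) = { h(w) | w ∈ L }`. -/
def homImg (h : α → List α) (L : Language α) : Language α :=
  homExt h '' L

theorem leftQuot_homImg [Fintype α] (h : α → List α) (hne : ∀ b : α, h b ≠ [])
    (a : α) (L : Language α) :
    leftQuot a (homImg h L) =
      ⋃ (b : α) (v : List α) (_ : h b = a :: v),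
        (fun w => v ++ w) '' homImg h (leftQuot b L) := by
  ext w
  constructor
  · rintro ⟨u, hu, heq⟩
    cases u with
    | nil => simp [homExt] at heq
    | cons b t =>
      simp only [homExt] at heq
      obtain ⟨v, hv⟩ : ∃ v, h b = a :: v := by
        cases hb : h b with
        | nil => exact absurd hb (hne b)
        | cons x xs =>
          rw [hb] at heq
          simp at heq
          exact ⟨xs, by rw [heq.1]⟩
      refine Set.mem_iUnion.2 ⟨b, Set.mem_iUnion.2 ⟨v, Set.mem_iUnion.2 ⟨hv,
        ⟨homExt h t, ⟨t, hu, rfl⟩, ?_⟩⟩⟩⟩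
      rw [hv] at heq
      simpa using heq
  · intro hw
    obtain ⟨b, hb⟩ := Set.mem_iUnion.1 hw
    obtain ⟨v, hv⟩ := Set.mem_iUnion.1 hb
    obtain ⟨hbv, u, ⟨t, ht, rfl⟩, rfl⟩ := Set.mem_iUnion.1 hv
    exact ⟨b :: t, ht, by simp [homExt, hbv]⟩
end

section
/- Let k ≥ 1. For every symbol a ∈ Σ and every language L ⊆ Σ*, the left quotient of the Hamming-distance approximation satisfies a\(H_k(L)) = H_k(a\L) ∪ ⋃_{x ∈ Σ, x ≠ a} H_{k-1}(x\L). -/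
variable {α : Type*} [DecidableEq α]

/-- The Hamming distance of two words: the number of differing positions if the words
have equal length, and `∞` otherwise. -/
def hamDist : List α → List α → ℕ∞
  | [], [] => 0
  | a :: u, b :: v => (if a = b then 0 else 1) + hamDist u v
  | [], _ :: _ => ⊤
  | _ :: _, [] => ⊤

/-- The Hamming approximation operator `H_k(L) = { v | ∃ u ∈ L, d(u, v) ≤ k }`. -/
def hammingApprox (k : ℕ) (L : Language α) : Language α :=
  { v | ∃ u ∈ L, hamDist u v ≤ (k : ℕ∞) }

lemma aux_one_add (k : ℕ) (hk : 1 ≤ k) (d : ℕ∞) :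
    1 + d ≤ (k : ℕ∞) ↔ d ≤ ((k - 1 : ℕ) : ℕ∞) := by
  cases d with
  | top => simp
  | coe n =>
    rw [show ((1 : ℕ∞) + n) = ((1 + n : ℕ) : ℕ∞) by push_cast; ring, Nat.cast_le, Nat.cast_le]
    omega

theorem leftQuot_hammingApprox [Fintype α] (k : ℕ) (hk : 1 ≤ k) (a : α) (L : Language α) :
    leftQuot a (hammingApprox k L) =
      Set.union (hammingApprox k (leftQuot a L))
        (⋃ (x : α) (_ : x ≠ a), (hammingApprox (k - 1) (leftQuot x L) : Set (List α))) := by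
  ext w
  simp only [leftQuot, hammingApprox, Set.mem_setOf_eq, Set.union, Set.mem_iUnion]
  constructor
  · rintro ⟨u, hu, hd⟩
    cases u with
    | nil => simp [hamDist] at hd
    | cons x u' =>
      by_cases hxa : x = a
      · subst hxa
        left
        exact ⟨u', hu, by simpa [hamDist] using hd⟩
      · right
        refine ⟨x, hxa, u', hu, ?_⟩
        rw [show hamDist (x :: u') (a :: w) = (if x = a then 0 else 1) + hamDist u' w from rfl,
          if_neg hxa] at hd
        exact (aux_one_add k hk _).mp hd
  · rintro (⟨u, hu, hd⟩ | ⟨x, hxa, u, hu, hd⟩)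
    · exact ⟨a :: u, hu, by simpa [hamDist] using hd⟩
    · refine ⟨x :: u, hu, ?_⟩
      rw [show hamDist (x :: u) (a :: w) = (if x = a then 0 else 1) + hamDist u w from rfl,
        if_neg hxa]
      exact (aux_one_add k hk _).mpr hd
end
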